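/- Let (Ω, P) be a probability space, d₁, …, d_T : Ω → ℝ integrable random variables with d_t ≥ 0 almost surely, p₁, …, p_T > 0 prices, L > 0 a resource limit, and ν ≥ 0. Suppose a* = (a₁*, …, a_T*) satisfies: a_t* ≥ 0 for all t; Σ_{t=1}^T a_t* = L; for every t with a_t* > 0 one has p_t · P(d_t > a_t*) = ν; and for every t with a_t* = 0 one has p_t ≤ ν. Then a* is optimal for the static resource allocation problem: for every b = (b₁, …, b_T) with b_t ≥ 0 for all t and Σ_{t=1}^T b_t = L, we have E[Σ_{t=1}^T p_t · min(d_t, b_t)] ≤ E[Σ_{t=1}^T p_t · min(d_t, a_t*)]. -/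

import Mathlib

open MeasureTheory

lemma integrable_pmin {Ω : Type*} [MeasurableSpace Ω] (P : Measure Ω) [IsFiniteMeasure P]
    {d : Ω → ℝ} (hd : Integrable d P) (q c : ℝ) :
    Integrable (fun ω => q * min (d ω) c) P := by
  have : Integrable (fun ω => d ω ⊓ c) P := hd.inf (integrable_const c)
  simpa using this.const_mul q

/-- KKT sufficiency for the static resource allocation problem: if `a*` is feasible
(nonnegative, summing to `L`) and there is `ν ≥ 0` such that `p_t · P(d_t > a_t*) = ν`
whenever `a_t* > 0` and `p_t ≤ ν` whenever `a_t* = 0`, then `a*` maximizes the expected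
revenue `E[Σ_t p_t min(d_t, ·)]` over all feasible allocations. -/
theorem kkt_sufficient_static_allocation
    {Ω : Type*} [MeasurableSpace Ω] (P : Measure Ω) [IsProbabilityMeasure P]
    (T : ℕ) (d : Fin T → Ω → ℝ) (hd : ∀ t, Integrable (d t) P)
    (hd0 : ∀ t, ∀ᵐ ω ∂P, 0 ≤ d t ω)
    (p : Fin T → ℝ) (hp : ∀ t, 0 < p t)
    (L : ℝ) (hL : 0 < L) (ν : ℝ) (hν : 0 ≤ ν)
    (astar : Fin T → ℝ) (hastar0 : ∀ t, 0 ≤ astar t)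
    (hsum : ∑ t, astar t = L)
    (hpos : ∀ t, 0 < astar t → p t * (P {ω | astar t < d t ω}).toReal = ν)
    (hzero : ∀ t, astar t = 0 → p t ≤ ν) :
    ∀ b : Fin T → ℝ, (∀ t, 0 ≤ b t) → ∑ t, b t = L →
      ∫ ω, ∑ t, p t * min (d t ω) (b t) ∂P
        ≤ ∫ ω, ∑ t, p t * min (d t ω) (astar t) ∂P := by
  intro b hb0 hbsum
  -- per-coordinate key inequality
  have key : ∀ t : Fin T,
      ∫ ω, p t * min (d t ω) (b t) ∂P
        ≤ ∫ ω, p t * min (d t ω) (astar t) ∂P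
          + p t * (b t - astar t) * (P {ω | astar t < d t ω}).toReal := by
    intro t
    set f := (hd t).1.mk (d t) with hf
    have hfm : StronglyMeasurable f := (hd t).1.stronglyMeasurable_mk
    have heq : d t =ᵐ[P] f := (hd t).1.ae_eq_mk
    set S : Set Ω := {ω | astar t < f ω} with hS
    have hSm : MeasurableSet S := measurableSet_lt measurable_const hfm.measurable
    have hPS : P S = P {ω | astar t < d t ω} := by
      refine (measure_congr ?_).symm
      filter_upwards [heq] with ω hω
      show (astar t < d t ω) = (astar t < f ω)
      rw [hω]
    have hint1 : Integrable (fun ω => p t * min (d t ω) (astar t)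
        + S.indicator (fun _ => p t * (b t - astar t)) ω) P :=
      (integrable_pmin P (hd t) _ _).add
        ((integrable_const (p t * (b t - astar t))).indicator hSm)
    have hmono : ∀ᵐ ω ∂P, p t * min (d t ω) (b t)
        ≤ p t * min (d t ω) (astar t)
          + S.indicator (fun _ => p t * (b t - astar t)) ω := by
      filter_upwards [heq] with ω hω
      by_cases h : astar t < f ω
      · have hmem : ω ∈ S := h
        rw [Set.indicator_of_mem hmem]
        have h1 : min (d t ω) (astar t) = astar t :=
          min_eq_right (le_of_lt (by rw [hω]; exact h))
        rw [h1]
        have : min (d t ω) (b t) ≤ b t := min_le_right _ _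
        nlinarith [(hp t).le, mul_le_mul_of_nonneg_left this (hp t).le]
      · have hmem : ω ∉ S := h
        rw [Set.indicator_of_notMem hmem, add_zero]
        have hda : d t ω ≤ astar t := by rw [hω]; exact not_lt.1 h
        have : min (d t ω) (b t) ≤ min (d t ω) (astar t) :=
          le_min (min_le_left _ _) (le_trans (min_le_left _ _) hda)
        exact mul_le_mul_of_nonneg_left this (hp t).le
    calc ∫ ω, p t * min (d t ω) (b t) ∂P
        ≤ ∫ ω, (p t * min (d t ω) (astar t)
            + S.indicator (fun _ => p t * (b t - astar t)) ω) ∂P :=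
          integral_mono_ae (integrable_pmin P (hd t) _ _) hint1 hmono
      _ = ∫ ω, p t * min (d t ω) (astar t) ∂P
            + p t * (b t - astar t) * (P {ω | astar t < d t ω}).toReal := by
          rw [integral_add (integrable_pmin P (hd t) _ _)
            ((integrable_const (p t * (b t - astar t))).indicator hSm),
            integral_indicator_const _ hSm, measureReal_def, hPS, smul_eq_mul]
          ring
  -- KKT algebra: each correction term is ≤ ν * (b t - astar t)
  have hcorr : ∀ t : Fin T,
      p t * (b t - astar t) * (P {ω | astar t < d t ω}).toReal
        ≤ ν * (b t - astar t) := by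
    intro t
    rcases eq_or_lt_of_le (hastar0 t) with h0 | h0
    · -- astar t = 0
      have hPle : (P {ω | astar t < d t ω}).toReal ≤ 1 := by
        have := prob_le_one (μ := P) (s := {ω | astar t < d t ω})
        simpa using ENNReal.toReal_le_of_le_ofReal one_pos.le (by simpa using this)
      have hP0 : 0 ≤ (P {ω | astar t < d t ω}).toReal := ENNReal.toReal_nonneg
      have hpν := hzero t h0.symm
      rw [← h0, sub_zero]
      rw [← h0] at hPle hP0
      nlinarith [mul_nonneg (hp t).le (hb0 t), hb0 t]
    · have hEq := hpos t h0
      have : p t * (b t - astar t) * (P {ω | astar t < d t ω}).toReal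
          = (p t * (P {ω | astar t < d t ω}).toReal) * (b t - astar t) := by ring
      rw [this, hEq]
  have hib : ∀ t ∈ Finset.univ, Integrable (fun ω => p t * min (d t ω) (b t)) P :=
    fun t _ => integrable_pmin P (hd t) _ _
  have hia : ∀ t ∈ Finset.univ, Integrable (fun ω => p t * min (d t ω) (astar t)) P :=
    fun t _ => integrable_pmin P (hd t) _ _
  rw [integral_finset_sum _ hib, integral_finset_sum _ hia]
  calc ∑ t, ∫ ω, p t * min (d t ω) (b t) ∂P
      ≤ ∑ t, (∫ ω, p t * min (d t ω) (astar t) ∂P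
          + p t * (b t - astar t) * (P {ω | astar t < d t ω}).toReal) :=
        Finset.sum_le_sum fun t _ => key t
    _ ≤ ∑ t, (∫ ω, p t * min (d t ω) (astar t) ∂P + ν * (b t - astar t)) :=
        Finset.sum_le_sum fun t _ => add_le_add_right (hcorr t) _
    _ = ∑ t, ∫ ω, p t * min (d t ω) (astar t) ∂P + ν * (L - L) := by
        rw [Finset.sum_add_distrib, ← Finset.mul_sum, Finset.sum_sub_distrib, hbsum, hsum]
    _ = ∑ t, ∫ ω, p t * min (d t ω) (astar t) ∂P := by ring
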